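/- arXiv:2505.06580 — 4 statements merged into one kernel-verified Lean document; each statement's English description precedes it below -/
import Mathlib

section
/- Let f, f' : X → ℝ^C be score functions with induced classifiers h_f, h_{f'}, let ρ > 0, and fix x ∈ X and y ∈ {1,…,C}. Then Φ_ρ(M_f(x, h_{f'}(x))) ≤ Φ_ρ(M_{f'}(x, y)) + Φ_ρ(M_f(x, y)). -/
noncomputable section
open MeasureTheory Finset Set

namespace RobustUDA

/-- The input space: `ℝ^d`. -/
abbrev Inp (d : ℕ) := Fin d → ℝ

variable {d C : ℕ}

/-- `ℓ_p`-norm of a vector in `ℝ^d`. -/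
def pnorm (p : ℝ) (v : Inp d) : ℝ := (∑ i, |v i| ^ p) ^ (1 / p)

/-- The `ε`-ball centered at `x` in the `ℓ_p`-norm. -/
def ball (p ε : ℝ) (x : Inp d) : Set (Inp d) := {x' | pnorm p (fun i => x i - x' i) ≤ ε}

open Classical in
/-- Indicator function of a proposition, real valued. -/
def ind (P : Prop) : ℝ := if P then 1 else 0

/-- The ramp function `Φ_ρ`. -/
def ramp (ρ t : ℝ) : ℝ := if t ≤ 0 then 1 else if t ≤ ρ then 1 - t / ρ else 0

/-- The margin `M_f(x,y) = f_y(x) - max_{y' ≠ y} f_{y'}(x)`. -/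
def margin (f : Inp d → Fin C → ℝ) (x : Inp d) (y : Fin C) : ℝ :=
  f x y - sSup (f x '' {y' | y' ≠ y})

/-- Standard (0-1) risk of a classifier `hf` on a distribution `D` on `X × Y`. -/
def stdRisk (D : Measure (Inp d × Fin C)) (hf : Inp d → Fin C) : ℝ :=
  ∫ z, ind (z.2 ≠ hf z.1) ∂D

/-- Robust (0-1) risk of a classifier `hf`. -/
def robustRisk (p ε : ℝ) (D : Measure (Inp d × Fin C)) (hf : Inp d → Fin C) : ℝ :=
  ∫ z, sSup ((fun x' => ind (z.2 ≠ hf x')) '' ball p ε z.1) ∂D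

/-- Margin risk `R^{(ρ)}_D(f)`. -/
def marginRisk (ρ : ℝ) (D : Measure (Inp d × Fin C)) (f : Inp d → Fin C → ℝ) : ℝ :=
  ∫ z, ramp ρ (margin f z.1 z.2) ∂D

/-- Robust margin risk `R^{rob,(ρ)}_D(f)`. -/
def robustMarginRisk (p ε ρ : ℝ) (D : Measure (Inp d × Fin C)) (f : Inp d → Fin C → ℝ) : ℝ :=
  ∫ z, sSup ((fun x' => ramp ρ (margin f x' z.2)) '' ball p ε z.1) ∂D

/-- Margin disparity `disp^{(ρ)}_{D_X}(f', f)`, where `hf'` is the classifier induced by `f'`. -/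
def marginDisp (ρ : ℝ) (DX : Measure (Inp d)) (hf' : Inp d → Fin C)
    (f : Inp d → Fin C → ℝ) : ℝ :=
  ∫ x, ramp ρ (margin f x (hf' x)) ∂DX

/-- 0-1 robust disparity `disp^{rob}_{D_X}(f', f)`. -/
def robDisp (p ε : ℝ) (DX : Measure (Inp d)) (hf' hf : Inp d → Fin C) : ℝ :=
  ∫ x, sSup ((fun x' => ind (hf' x ≠ hf x')) '' ball p ε x) ∂DX

/-- Robust margin disparity `disp^{rob,(ρ)}_{D_X}(f', f)`. -/
def robMarginDisp (p ε ρ : ℝ) (DX : Measure (Inp d)) (hf' : Inp d → Fin C)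
    (f : Inp d → Fin C → ℝ) : ℝ :=
  ∫ x, sSup ((fun x' => ramp ρ (margin f x' (hf' x))) '' ball p ε x) ∂DX

/-- Point-wise local Lipschitz constant `L_f(x, ε)` (w.r.t. the `ℓ_p` ball and `ℓ₁` output norm). -/
def locLip (p ε : ℝ) (f : Inp d → Fin C → ℝ) (x : Inp d) : ℝ :=
  sSup ((fun x' => (∑ c, |f x' c - f x c|) / pnorm p (fun i => x' i - x i)) ''
    {x' | x' ∈ ball p ε x ∧ x' ≠ x})

/-- Topological support of a measure on the input space. -/
def msupport (μ : Measure (Inp d)) : Set (Inp d) :=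
  {x | ∀ U : Set (Inp d), IsOpen U → x ∈ U → 0 < μ U}

/-- Local Lipschitz constant `L_f(D_X, ε)` over the support of `D_X`. -/
def locLipOn (p ε : ℝ) (f : Inp d → Fin C → ℝ) (μ : Measure (Inp d)) : ℝ :=
  sSup (locLip p ε f '' msupport μ)

/-- Robust margin disparity discrepancy `d^{rob,(ρ)}_{f,F}(S_X, T_X)` where `cl` assigns
to each score function its induced classifier. -/
def discrepancy (p ε ρ : ℝ) (F : Set (Inp d → Fin C → ℝ))
    (cl : (Inp d → Fin C → ℝ) → Inp d → Fin C)
    (SX TX : Measure (Inp d)) (f : Inp d → Fin C → ℝ) : ℝ :=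
  sSup ((fun f' => robMarginDisp p ε ρ TX (cl f') f - marginDisp ρ SX (cl f') f) '' F)

/-- The class `Π₁F` of component functions of score functions in `F`. -/
def Pi1 (F : Set (Inp d → Fin C → ℝ)) : Set (Inp d → ℝ) :=
  {g | ∃ f ∈ F, ∃ y : Fin C, g = fun x => f x y}

/-- The class `Π_H F` where `H = {h_f : f ∈ F}` is given by the classifier assignment `cl`. -/
def PiH (F : Set (Inp d → Fin C → ℝ)) (cl : (Inp d → Fin C → ℝ) → Inp d → Fin C) :
    Set (Inp d → ℝ) :=
  {g | ∃ f ∈ F, ∃ f' ∈ F, g = fun x => f x (cl f' x)}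

/-- Rademacher complexity `ℜ_{n,D}(G)` of a class `G` of real functions on `Z`. -/
def rademacher (n : ℕ) {Z : Type*} [MeasurableSpace Z] (D : Measure Z) (G : Set (Z → ℝ)) : ℝ :=
  ∫ z : Fin n → Z, ∫ σ : Fin n → Bool,
      sSup ((fun g => (n : ℝ)⁻¹ * ∑ i, (if σ i then (1 : ℝ) else -1) * g (z i)) '' G)
    ∂(Measure.pi fun _ => (PMF.uniformOfFintype Bool).toMeasure) ∂(Measure.pi fun _ => D)


theorem ramp_nonneg (ρ t : ℝ) : 0 ≤ ramp ρ t := by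
  unfold ramp
  split_ifs with ht₀ htρ
  · exact zero_le_one
  · linarith [div_le_one_of_le₀ htρ (by linarith : (0 : ℝ) ≤ ρ)]
  · exact le_rfl

theorem ramp_le_one (ρ t : ℝ) : ramp ρ t ≤ 1 := by
  unfold ramp
  split_ifs with ht₀ htρ
  · exact le_rfl
  · linarith [div_nonneg (by linarith : (0 : ℝ) ≤ t) (by linarith : (0 : ℝ) ≤ ρ)]
  · exact zero_le_one

theorem ramp_of_nonpos (ρ : ℝ) {t : ℝ} (ht : t ≤ 0) : ramp ρ t = 1 := if_pos ht

theorem margin_nonpos_of_le (f : Inp d → Fin C → ℝ) (x : Inp d) {y y' : Fin C} (hne : y' ≠ y)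
    (hle : f x y ≤ f x y') : margin f x y ≤ 0 := by
  have hbdd : BddAbove (f x '' {y'' | y'' ≠ y}) := ((Set.toFinite _).image _).bddAbove
  have hsup : f x y' ≤ sSup (f x '' {y'' | y'' ≠ y}) := le_csSup hbdd ⟨y', hne, rfl⟩
  unfold margin
  linarith

/-- If `y` is the label chosen by `f'`, the first summand on the right already dominates;
otherwise `f'` ranks `hf' x` at least as high as `y`, so `M_{f'}(x, y) ≤ 0` and that summand is
`1`, the maximum value of `Φ_ρ`. -/
theorem ramp_margin_disparity_triangle_general {d C : ℕ}
    (f f' : Inp d → Fin C → ℝ) (hf' : Inp d → Fin C)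
    (hcl' : ∀ x y, f' x y ≤ f' x (hf' x))
    (ρ : ℝ) (x : Inp d) (y : Fin C) :
    ramp ρ (margin f x (hf' x)) ≤ ramp ρ (margin f' x y) + ramp ρ (margin f x y) := by
  by_cases hy : hf' x = y
  · rw [hy]
    exact le_add_of_nonneg_left (ramp_nonneg ρ _)
  · rw [ramp_of_nonpos ρ (margin_nonpos_of_le f' x hy (hcl' x y))]
    linarith [ramp_le_one ρ (margin f x (hf' x)), ramp_nonneg ρ (margin f x y)]

/-- For score functions `f, f'` with induced classifiers `hf, hf'`, `ρ > 0`,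
any `x` and `y`: `Φ_ρ(M_f(x, h_{f'}(x))) ≤ Φ_ρ(M_{f'}(x, y)) + Φ_ρ(M_f(x, y))`. -/
theorem ramp_margin_disparity_triangle {d C : ℕ} (hC : 2 ≤ C)
    (f f' : Inp d → Fin C → ℝ) (hf hf' : Inp d → Fin C)
    (hcl : ∀ x y, f x y ≤ f x (hf x))
    (hcl' : ∀ x y, f' x y ≤ f' x (hf' x))
    (ρ : ℝ) (hρ : 0 < ρ) (x : Inp d) (y : Fin C) :
    ramp ρ (margin f x (hf' x)) ≤ ramp ρ (margin f' x y) + ramp ρ (margin f x y) :=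
  ramp_margin_disparity_triangle_general f f' hf' hcl' ρ x y

end RobustUDA
end
end

section
/- Let T be a probability distribution on X × Y with marginal T_X, and fix ε > 0, p ≥ 1 (all relevant integrands measurable and integrable). Then for every pair of score functions f, f* : X → ℝ^C: R^{rob}_T(f) ≤ disp^{rob}_{T_X}(f*, f) + R_T(f*). -/
noncomputable section
open MeasureTheory Finset Set

namespace RobustUDA

variable {d C : ℕ}

/-! If `y ≠ h x'` then `y ≠ h* x` or `h* x ≠ h x'`: pointwise, the robust 0-1 loss of `h` is at
most the robust disagreement of `h` with `h*` plus the 0-1 loss of `h*`. Integrating over `T`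
gives the bound, the disagreement term depending on `x` only. -/

theorem ind_ne_le_add {β : Type*} (a b c : β) : ind (a ≠ c) ≤ ind (b ≠ c) + ind (a ≠ b) := by
  unfold ind
  split_ifs <;> simp_all

theorem ind_nonneg (P : Prop) : 0 ≤ ind P := by
  unfold ind
  split_ifs <;> norm_num

theorem ind_le_one (P : Prop) : ind P ≤ 1 := by
  unfold ind
  split_ifs <;> norm_num

theorem sSup_image_le_sSup_image_add {α : Type*} {S : Set α} {u v : α → ℝ} {c : ℝ}
    (hv : BddAbove (v '' S)) (hc : 0 ≤ c) (huv : ∀ x ∈ S, u x ≤ v x + c) :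
    sSup (u '' S) ≤ sSup (v '' S) + c := by
  rcases S.eq_empty_or_nonempty with rfl | hS
  · simpa using hc -- `sSup ∅ = 0` in `ℝ`
  · refine csSup_le (hS.image u) ?_
    rintro _ ⟨x, hx, rfl⟩
    exact (huv x hx).trans (add_le_add_left (le_csSup hv (mem_image_of_mem v hx)) c)

theorem sSup_ind_ne_le {α β : Type*} (S : Set α) (h : α → β) (y y' : β) :
    sSup ((fun x' => ind (y ≠ h x')) '' S) ≤
      sSup ((fun x' => ind (y' ≠ h x')) '' S) + ind (y ≠ y') := by
  refine sSup_image_le_sSup_image_add ⟨1, ?_⟩ (ind_nonneg _) fun x' _ => ind_ne_le_add _ _ _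
  rintro _ ⟨x', _, rfl⟩
  exact ind_le_one _

theorem robustRisk_le_robDisp_add_stdRisk_general {d C : ℕ}
    (ε p : ℝ)
    (T : Measure (Inp d × Fin C))
    (hf hfs : Inp d → Fin C)
    (hint2 : Integrable
      (fun x => sSup ((fun x' => ind (hfs x ≠ hf x')) '' ball p ε x)) (T.map Prod.fst))
    (hint3 : Integrable (fun z => ind (z.2 ≠ hfs z.1)) T) :
    robustRisk p ε T hf ≤ robDisp p ε (T.map Prod.fst) hfs hf + stdRisk T hfs := by
  set disp := fun x => sSup ((fun x' => ind (hfs x ≠ hf x')) '' ball p ε x)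
  have hdisp : Integrable (fun z => disp z.1) T :=
    (integrable_map_measure hint2.aestronglyMeasurable measurable_fst.aemeasurable).mp hint2
  calc robustRisk p ε T hf
      ≤ ∫ z, (disp z.1 + ind (z.2 ≠ hfs z.1)) ∂T :=
        integral_mono_of_nonneg
          (ae_of_all _ fun z => Real.sSup_nonneg <| by
            rintro _ ⟨x', _, rfl⟩
            exact ind_nonneg _)
          (hdisp.add hint3) (ae_of_all _ fun z => sSup_ind_ne_le _ hf z.2 (hfs z.1))
    _ = ∫ z, disp z.1 ∂T + ∫ z, ind (z.2 ≠ hfs z.1) ∂T := integral_add hdisp hint3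
    _ = robDisp p ε (T.map Prod.fst) hfs hf + stdRisk T hfs := by
        rw [robDisp, stdRisk, integral_map measurable_fst.aemeasurable hint2.aestronglyMeasurable]

/-- For every pair of score functions `f, f*`:
`R^{rob}_T(f) ≤ disp^{rob}_{T_X}(f*, f) + R_T(f*)`. -/
theorem robustRisk_le_robDisp_add_stdRisk {d C : ℕ}
    (ε p : ℝ) (hε : 0 < ε) (hp : 1 ≤ p)
    (T : Measure (Inp d × Fin C)) [IsProbabilityMeasure T]
    (f fs : Inp d → Fin C → ℝ) (hf hfs : Inp d → Fin C)
    (hcl : ∀ x y, f x y ≤ f x (hf x))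
    (hcls : ∀ x y, fs x y ≤ fs x (hfs x))
    (hint1 : Integrable (fun z => sSup ((fun x' => ind (z.2 ≠ hf x')) '' ball p ε z.1)) T)
    (hint2 : Integrable
      (fun x => sSup ((fun x' => ind (hfs x ≠ hf x')) '' ball p ε x)) (T.map Prod.fst))
    (hint3 : Integrable (fun z => ind (z.2 ≠ hfs z.1)) T) :
    robustRisk p ε T hf ≤ robDisp p ε (T.map Prod.fst) hfs hf + stdRisk T hfs :=
  robustRisk_le_robDisp_add_stdRisk_general ε p T hf hfs hint2 hint3

end RobustUDA
end
end

section
/- Let D_X be a probability distribution on X, let f, f' : X → ℝ^C be score functions with L_f(D_X, ε) finite, and fix ρ > 0, ε > 0, p ≥ 1 (all relevant integrands measurable and integrable). Then the robust margin disparity is bounded by the margin disparity plus a Lipschitz correction: disp^{rob,(ρ)}_{D_X}(f', f) ≤ disp^{(ρ)}_{D_X}(f', f) + (2ε/ρ) L_f(D_X, ε). -/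
noncomputable section
open MeasureTheory Finset Set

namespace RobustUDA

variable {d C : ℕ}

/- ### Auxiliary lemmas -/

lemma pnorm_nonneg' (p : ℝ) (v : Inp d) : 0 ≤ pnorm p v :=
  Real.rpow_nonneg (Finset.sum_nonneg fun i _ => Real.rpow_nonneg (abs_nonneg _) _) _

lemma self_mem_ball' {p ε : ℝ} (hp : 1 ≤ p) (hε : 0 ≤ ε) (x : Inp d) : x ∈ ball p ε x := by
  have hp0 : p ≠ 0 := by linarith
  have h1p : (1 : ℝ) / p ≠ 0 := one_div_ne_zero hp0
  simp [ball, pnorm, sub_self, Real.zero_rpow hp0, Real.zero_rpow h1p, Real.zero_rpow (inv_ne_zero hp0), hε]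

lemma pnorm_pos' {p : ℝ} (hp : 1 ≤ p) {v : Inp d} (hv : ∃ i, v i ≠ 0) : 0 < pnorm p v := by
  obtain ⟨i, hi⟩ := hv
  have hp0 : 0 < p := by linarith
  have hsum : 0 < ∑ j, |v j| ^ p :=
    Finset.sum_pos' (fun j _ => Real.rpow_nonneg (abs_nonneg _) _)
      ⟨i, Finset.mem_univ i, Real.rpow_pos_of_pos (abs_pos.mpr hi) p⟩
  exact Real.rpow_pos_of_pos hsum _

lemma pnorm_sub_comm' (p : ℝ) (x x' : Inp d) :
    pnorm p (fun i => x i - x' i) = pnorm p (fun i => x' i - x i) := by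
  unfold pnorm
  congr 1
  exact Finset.sum_congr rfl fun i _ => by rw [abs_sub_comm]

lemma ramp_lip' {ρ : ℝ} (hρ : 0 < ρ) (s t : ℝ) :
    ramp ρ s ≤ ramp ρ t + |s - t| / ρ := by
  have h2 : t - s ≤ |s - t| := by rw [abs_sub_comm]; exact le_abs_self _
  have hu : 0 ≤ |s - t| / ρ := div_nonneg (abs_nonneg _) hρ.le
  have hd1 : t / ρ ≤ s / ρ + |s - t| / ρ := by
    rw [← add_div, div_le_div_iff₀ hρ hρ]
    nlinarith
  have hr1 : ∀ u : ℝ, u ≤ 0 → ramp ρ u = 1 := fun u h => if_pos h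
  have hr2 : ∀ u : ℝ, 0 < u → u ≤ ρ → ramp ρ u = 1 - u / ρ := fun u h1 h2 => by
    rw [ramp, if_neg (not_le.mpr h1), if_pos h2]
  have hr3 : ∀ u : ℝ, ρ < u → ramp ρ u = 0 := fun u h => by
    rw [ramp, if_neg (not_le.mpr (lt_trans hρ h)), if_neg (not_le.mpr h)]
  rcases le_or_gt s 0 with hs | hs
  · have hs' : s / ρ ≤ 0 := div_nonpos_of_nonpos_of_nonneg hs hρ.le
    rcases le_or_gt t 0 with ht | ht
    · rw [hr1 s hs, hr1 t ht]; linarith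
    · rcases le_or_gt t ρ with ht2 | ht2
      · rw [hr1 s hs, hr2 t ht ht2]; linarith
      · rw [hr1 s hs, hr3 t ht2]
        have : 1 < t / ρ := (one_lt_div hρ).mpr ht2
        linarith
  · rcases le_or_gt s ρ with hs2 | hs2
    · have hs' : 0 ≤ s / ρ := div_nonneg hs.le hρ.le
      rcases le_or_gt t 0 with ht | ht
      · rw [hr2 s hs hs2, hr1 t ht]; linarith
      · rcases le_or_gt t ρ with ht2 | ht2
        · rw [hr2 s hs hs2, hr2 t ht ht2]; linarith
        · rw [hr2 s hs hs2, hr3 t ht2]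
          have : 1 < t / ρ := (one_lt_div hρ).mpr ht2
          linarith
    · rw [hr3 s hs2]
      rcases le_or_gt t 0 with ht | ht
      · rw [hr1 t ht]; linarith
      · rcases le_or_gt t ρ with ht2 | ht2
        · rw [hr2 t ht ht2]
          have : t / ρ ≤ 1 := (div_le_one hρ).mpr ht2
          linarith
        · rw [hr3 t ht2]; linarith

lemma abs_margin_sub_le' (hC : 2 ≤ C) (f : Inp d → Fin C → ℝ) (x x' : Inp d) (y : Fin C) :
    |margin f x' y - margin f x y| ≤ 2 * ∑ c, |f x' c - f x c| := by
  have hterm : |f x' y - f x y| ≤ ∑ c, |f x' c - f x c| :=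
    Finset.single_le_sum (f := fun c => |f x' c - f x c|) (fun i _ => abs_nonneg _)
      (Finset.mem_univ y)
  have hne : ({y' : Fin C | y' ≠ y}).Nonempty := by
    have : Nontrivial (Fin C) := Fin.nontrivial_iff_two_le.mpr hC
    obtain ⟨z, hz⟩ := exists_ne y; exact ⟨z, hz⟩
  have key : ∀ u v : Inp d,
      sSup (f u '' {y' | y' ≠ y}) ≤ sSup (f v '' {y' | y' ≠ y}) + ∑ c, |f u c - f v c| := by
    intro u v
    apply csSup_le (hne.image _)
    rintro a ⟨y', hy', rfl⟩
    have h1 : f v y' ≤ sSup (f v '' {y' | y' ≠ y}) :=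
      le_csSup ((Set.toFinite _).image _).bddAbove ⟨y', hy', rfl⟩
    have h2 : f u y' - f v y' ≤ |f u y' - f v y'| := le_abs_self _
    have h3 : |f u y' - f v y'| ≤ ∑ c, |f u c - f v c| :=
      Finset.single_le_sum (f := fun c => |f u c - f v c|) (fun i _ => abs_nonneg _)
        (Finset.mem_univ y')
    linarith
  have k1 := key x' x
  have k2 := key x x'
  have hsum : ∑ c, |f x c - f x' c| = ∑ c, |f x' c - f x c| :=
    Finset.sum_congr rfl fun c _ => by rw [abs_sub_comm]
  rw [hsum] at k2
  have habs : -(∑ c, |f x' c - f x c|) ≤ f x' y - f x y := by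
    have := neg_abs_le (f x' y - f x y); linarith
  have habs2 : f x' y - f x y ≤ ∑ c, |f x' c - f x c| :=
    le_trans (le_abs_self _) hterm
  rw [abs_le]
  unfold margin
  constructor <;> linarith

lemma locLip_nonneg' (p ε : ℝ) (f : Inp d → Fin C → ℝ) (x : Inp d) :
    0 ≤ locLip p ε f x := by
  apply Real.sSup_nonneg
  rintro a ⟨x', _, rfl⟩
  exact div_nonneg (Finset.sum_nonneg fun c _ => abs_nonneg _) (pnorm_nonneg' _ _)

/-- The robust margin disparity is bounded by the margin disparity plus a
Lipschitz correction:
`disp^{rob,(ρ)}_{D_X}(f', f) ≤ disp^{(ρ)}_{D_X}(f', f) + (2ε/ρ) L_f(D_X, ε)`. -/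
theorem robMarginDisp_le_marginDisp_add_lipschitz {d C : ℕ} (hC : 2 ≤ C)
    (ρ ε p : ℝ) (hρ : 0 < ρ) (hε : 0 < ε) (hp : 1 ≤ p)
    (DX : Measure (Inp d)) [IsProbabilityMeasure DX]
    (f f' : Inp d → Fin C → ℝ) (hf hf' : Inp d → Fin C)
    (hcl : ∀ x y, f x y ≤ f x (hf x))
    (hcl' : ∀ x y, f' x y ≤ f' x (hf' x))
    (hLfin : BddAbove (locLip p ε f '' msupport DX))
    (hLptfin : ∀ x ∈ msupport DX, BddAbove
      ((fun x' => (∑ c, |f x' c - f x c|) / pnorm p (fun i => x' i - x i)) ''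
        {x' | x' ∈ ball p ε x ∧ x' ≠ x}))
    (hint1 : Integrable
      (fun x => sSup ((fun x' => ramp ρ (margin f x' (hf' x))) '' ball p ε x)) DX)
    (hint2 : Integrable (fun x => ramp ρ (margin f x (hf' x))) DX) :
    robMarginDisp p ε ρ DX hf' f ≤
      marginDisp ρ DX hf' f + (2 * ε / ρ) * locLipOn p ε f DX := by
  set L := locLipOn p ε f DX with hLdef
  -- pointwise bound on the support
  have hpt : ∀ x ∈ msupport DX,
      sSup ((fun x' => ramp ρ (margin f x' (hf' x))) '' ball p ε x)
        ≤ ramp ρ (margin f x (hf' x)) + (2 * ε / ρ) * L := by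
    intro x hx
    have hxL : locLip p ε f x ≤ L := le_csSup hLfin ⟨x, hx, rfl⟩
    have hL0 : 0 ≤ L := le_trans (locLip_nonneg' p ε f x) hxL
    have hbne : ((fun x' => ramp ρ (margin f x' (hf' x))) '' ball p ε x).Nonempty :=
      ⟨_, Set.mem_image_of_mem _ (self_mem_ball' hp hε.le x)⟩
    apply csSup_le hbne
    rintro a ⟨x', hx', rfl⟩
    have hδ : ∑ c, |f x' c - f x c| ≤ locLip p ε f x * ε := by
      by_cases hxx : x' = x
      · subst hxx
        have : ∑ c, |f x' c - f x' c| = 0 := by simp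
        rw [this]
        exact mul_nonneg (locLip_nonneg' p ε f x') hε.le
      · have hq : (∑ c, |f x' c - f x c|) / pnorm p (fun i => x' i - x i)
            ≤ locLip p ε f x :=
          le_csSup (hLptfin x hx) (Set.mem_image_of_mem _ ⟨hx', hxx⟩)
        have hiex : ∃ i, x' i - x i ≠ 0 := by
          by_contra h
          push_neg at h
          exact hxx (funext fun i => by have := h i; linarith [sub_eq_zero.mp (h i)])
        have hpos : 0 < pnorm p (fun i => x' i - x i) := pnorm_pos' hp hiex
        have hle : pnorm p (fun i => x' i - x i) ≤ ε := by
          rw [← pnorm_sub_comm']; exact hx'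
        calc ∑ c, |f x' c - f x c|
            = ((∑ c, |f x' c - f x c|) / pnorm p (fun i => x' i - x i))
              * pnorm p (fun i => x' i - x i) := (div_mul_cancel₀ _ hpos.ne').symm
          _ ≤ locLip p ε f x * pnorm p (fun i => x' i - x i) :=
              mul_le_mul_of_nonneg_right hq hpos.le
          _ ≤ locLip p ε f x * ε :=
              mul_le_mul_of_nonneg_left hle (locLip_nonneg' p ε f x)
    have hm := abs_margin_sub_le' hC f x x' (hf' x)
    have hrl := ramp_lip' hρ (margin f x' (hf' x)) (margin f x (hf' x))
    have hfin : |margin f x' (hf' x) - margin f x (hf' x)| / ρ ≤ 2 * ε / ρ * L := by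
      have h1 : |margin f x' (hf' x) - margin f x (hf' x)| ≤ 2 * (L * ε) := by
        nlinarith [hδ, hxL, hε.le, locLip_nonneg' p ε f x]
      calc |margin f x' (hf' x) - margin f x (hf' x)| / ρ
          ≤ (2 * (L * ε)) / ρ := by
            gcongr
        _ = 2 * ε / ρ * L := by ring
    linarith
  -- the complement of the support is null
  have hnull : DX (msupport DX)ᶜ = 0 := by
    apply measure_null_of_locally_null
    intro x hx
    simp only [msupport, Set.mem_compl_iff, Set.mem_setOf_eq, not_forall] at hx
    obtain ⟨U, hUopen, hxU, hU0⟩ := hx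
    exact ⟨U, Filter.mem_inf_of_left (hUopen.mem_nhds hxU),
      le_antisymm (not_lt.mp hU0) zero_le⟩
  have hae : ∀ᵐ x ∂DX,
      sSup ((fun x' => ramp ρ (margin f x' (hf' x))) '' ball p ε x)
        ≤ ramp ρ (margin f x (hf' x)) + (2 * ε / ρ) * L := by
    filter_upwards [MeasureTheory.compl_mem_ae_iff.mpr hnull] with x hx
    exact hpt x (not_not.mp hx)
  calc robMarginDisp p ε ρ DX hf' f
      ≤ ∫ x, (ramp ρ (margin f x (hf' x)) + (2 * ε / ρ) * L) ∂DX :=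
        integral_mono_ae hint1 (hint2.add (integrable_const _)) hae
    _ = marginDisp ρ DX hf' f + (2 * ε / ρ) * L := by
        rw [integral_add hint2 (integrable_const _), integral_const, probReal_univ,
          one_smul]
        rfl

end RobustUDA
end
end

section
/- Let f, f' : X → ℝ^C be score functions with C ≥ 2, and define the τ_{f'}-transform of f by τ_{f'}f(x, y) = f_1(x) if y = h_{f'}(x); τ_{f'}f(x, y) = f_{h_{f'}(x)}(x) if y = 1 (and y ≠ h_{f'}(x)); and τ_{f'}f(x, y) = f_y(x) otherwise. Then for every x ∈ X the margin of the transformed score function at class 1 equals the margin of f at the pseudo-label h_{f'}(x): M_{τ_{f'}f}(x, 1) = M_f(x, h_{f'}(x)). -/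
noncomputable section
open MeasureTheory Finset Set

namespace RobustUDA

variable {d C : ℕ}

theorem margin_comp_perm (f g : Inp d → Fin C → ℝ) (x : Inp d) (σ : Equiv.Perm (Fin C))
    (hg : g x = f x ∘ σ) (y : Fin C) : margin g x y = margin f x (σ y) := by
  have hpreimage : {y' | y' ≠ y} = σ ⁻¹' {y' | y' ≠ σ y} := by ext; simp
  rw [margin, margin, hg, Set.image_comp, hpreimage, σ.image_preimage]
  rfl

theorem ite_eq_comp_swap {α β : Type*} [DecidableEq α] (v : α → β) (a b y : α) :
    (if y = a then v b else if y = b then v a else v y) = v (Equiv.swap a b y) := by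
  rw [Equiv.swap_apply_def]
  split_ifs <;> rfl

/-- Class `1` is `⟨0, _⟩ : Fin C`. The `τ`-transform relabels `f x` by the transposition of
`h_{f'}(x)` and `1`, and margins are invariant under relabelling. -/
theorem margin_tau_transform {d C : ℕ} (hC : 2 ≤ C)
    (f : Inp d → Fin C → ℝ) (hf' : Inp d → Fin C) (x : Inp d) :
    margin
      (fun x y =>
        if y = hf' x then f x ⟨0, by omega⟩
        else if y = ⟨0, by omega⟩ then f x (hf' x)
        else f x y)
      x ⟨0, by omega⟩ = margin f x (hf' x) := by
  rw [margin_comp_perm f _ x (Equiv.swap (hf' x) ⟨0, by omega⟩)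
    (funext fun y => ite_eq_comp_swap (f x) _ _ y), Equiv.swap_apply_right]

end RobustUDA
end
end
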